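/- Let g ≥ 1 and n ≥ 3 with (n,g) ≠ (3,1). For all integers r with 1 ≤ r ≤ n−1, one has (r+1)^r · t_{g,n−r}^{r+1} ≤ 2·t_{g,n−1}², and equality holds if and only if r = 1 or (g,r,n) equals (1,2,4) or (2,2,3). -/
import Mathlib

/-- The `g`-Sylvester sequence: `s_{g,1} = g+1`, `s_{g,k+1} = s_{g,k}(s_{g,k}-1)+1`.
(The value at `0` is junk and never used.) -/
def sylv (g : ℕ) : ℕ → ℕ
  | 0 => 0
  | 1 => g + 1
  | k + 2 => sylv g (k + 1) * (sylv g (k + 1) - 1) + 1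

/-- The truncated `g`-Sylvester sequence `t_{g,k} = s_{g,k} - 1`. -/
def tsylv (g k : ℕ) : ℕ := sylv g k - 1

lemma sylv_pos (g k : ℕ) (hk : 1 ≤ k) : 1 ≤ sylv g k := by
  match k with
  | 1 => simp [sylv]
  | k + 2 => simp [sylv]

lemma tsylv_one (g : ℕ) : tsylv g 1 = g := by simp [tsylv, sylv]

lemma tsylv_succ (g k : ℕ) (hk : 1 ≤ k) :
    tsylv g (k + 1) = tsylv g k * (tsylv g k + 1) := by
  obtain ⟨m, rfl⟩ : ∃ m, k = m + 1 := ⟨k - 1, by omega⟩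
  have hs := sylv_pos g (m + 1) (by omega)
  have hdef : sylv g (m + 1 + 1) = sylv g (m + 1) * (sylv g (m + 1) - 1) + 1 := rfl
  unfold tsylv
  rw [hdef, Nat.add_sub_cancel, Nat.sub_add_cancel hs, Nat.mul_comm]

lemma tsylv_le (g : ℕ) {k m : ℕ} (hk : 1 ≤ k) (h : k ≤ m) :
    tsylv g k ≤ tsylv g m := by
  induction m, h using Nat.le_induction with
  | base => exact le_refl _
  | succ m hm ih =>
    calc tsylv g k ≤ tsylv g m := ih
      _ ≤ tsylv g m * (tsylv g m + 1) := Nat.le_mul_of_pos_right _ (by omega)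
      _ = tsylv g (m + 1) := (tsylv_succ g m (by omega)).symm

lemma tsylv_pos (g : ℕ) (hg : 1 ≤ g) {k : ℕ} (hk : 1 ≤ k) : 1 ≤ tsylv g k := by
  have := tsylv_le g (le_refl 1) hk
  rw [tsylv_one] at this
  omega

lemma tsylv_two (g : ℕ) : tsylv g 2 = g * (g + 1) := by
  rw [show (2 : ℕ) = 1 + 1 from rfl, tsylv_succ g 1 (le_refl 1), tsylv_one]

lemma tsylv_eq_two (g : ℕ) (hg : 1 ≤ g) {k : ℕ} (hk : 1 ≤ k) :
    tsylv g k = 2 ↔ (g = 1 ∧ k = 2) ∨ (g = 2 ∧ k = 1) := by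
  constructor
  · intro h
    match k with
    | 1 => rw [tsylv_one] at h; omega
    | 2 =>
      rw [tsylv_two] at h
      left
      refine ⟨?_, rfl⟩
      rcases Nat.lt_or_ge g 2 with h2 | h2
      · omega
      · nlinarith
    | (m + 3) =>
      exfalso
      have h3 : tsylv g 3 ≤ tsylv g (m + 3) := tsylv_le g (by omega) (by omega)
      have ht3 : tsylv g 3 = (g * (g + 1)) * (g * (g + 1) + 1) := by
        rw [show (3 : ℕ) = 2 + 1 from rfl, tsylv_succ g 2 (by omega), tsylv_two]
      have hA : 1 * 2 ≤ g * (g + 1) := Nat.mul_le_mul hg (by omega)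
      have hB : 2 * 3 ≤ (g * (g + 1)) * (g * (g + 1) + 1) :=
        Nat.mul_le_mul (by omega) (by omega)
      linarith
  · rintro (⟨rfl, rfl⟩ | ⟨rfl, rfl⟩) <;> simp [tsylv_two, tsylv_one]

lemma key_pow : ∀ r, 2 ≤ r → (r + 2) ^ (r + 1) < 2 ^ (r + 1) * (r + 1) ^ r := by
  intro r hr
  induction r, hr using Nat.le_induction with
  | base => norm_num
  | succ r hr ih =>
    have hmain : (r + 3) ^ (r + 2) * (r + 1) ^ (r + 1) <
        (2 ^ (r + 2) * (r + 2) ^ (r + 1)) * (r + 1) ^ (r + 1) := by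
      calc (r + 3) ^ (r + 2) * (r + 1) ^ (r + 1)
          = (r + 3) * ((r + 3) * (r + 1)) ^ (r + 1) := by rw [mul_pow]; ring
        _ ≤ (2 * (r + 1)) * ((r + 2) * (r + 2)) ^ (r + 1) :=
            Nat.mul_le_mul (by omega) (Nat.pow_le_pow_left (by nlinarith) _)
        _ = (2 * (r + 1) * (r + 2) ^ (r + 1)) * (r + 2) ^ (r + 1) := by rw [mul_pow]; ring
        _ < (2 * (r + 1) * (r + 2) ^ (r + 1)) * (2 ^ (r + 1) * (r + 1) ^ r) :=
            mul_lt_mul_of_pos_left ih (by positivity)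
        _ = (2 ^ (r + 2) * (r + 2) ^ (r + 1)) * (r + 1) ^ (r + 1) := by ring
    have := lt_of_mul_lt_mul_right hmain (Nat.zero_le _)
    calc (r + 1 + 2) ^ (r + 1 + 1) = (r + 3) ^ (r + 2) := by ring_nf
      _ < 2 ^ (r + 2) * (r + 2) ^ (r + 1) := this
      _ = 2 ^ (r + 1 + 1) * (r + 1 + 1) ^ (r + 1) := by ring_nf

lemma pow_aux (s u : ℕ) (hu : 1 ≤ u) : 2 ^ (s + 3) * u ≤ (u + 1) ^ (s + 3) := by
  have h4 : 4 * u ≤ (u + 1) ^ 2 := by nlinarith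
  calc 2 ^ (s + 3) * u = 2 ^ (s + 1) * (4 * u) := by ring
    _ ≤ (u + 1) ^ (s + 1) * (u + 1) ^ 2 :=
        Nat.mul_le_mul (Nat.pow_le_pow_left (by omega) _) h4
    _ = (u + 1) ^ (s + 3) := by ring

lemma core_strict (s u : ℕ) (hu : 1 ≤ u) :
    (s + 4) ^ (s + 3) * u < (s + 3) ^ (s + 2) * (u + 1) ^ (s + 3) := by
  have hk : (s + 4) ^ (s + 3) < 2 ^ (s + 3) * (s + 3) ^ (s + 2) := by
    have := key_pow (s + 2) (by omega)
    calc (s + 4) ^ (s + 3) = (s + 2 + 2) ^ (s + 2 + 1) := by ring_nf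
      _ < 2 ^ (s + 2 + 1) * (s + 2 + 1) ^ (s + 2) := this
      _ = 2 ^ (s + 3) * (s + 3) ^ (s + 2) := by ring_nf
  calc (s + 4) ^ (s + 3) * u < (2 ^ (s + 3) * (s + 3) ^ (s + 2)) * u :=
        mul_lt_mul_of_pos_right hk (by omega)
    _ = (s + 3) ^ (s + 2) * (2 ^ (s + 3) * u) := by ring
    _ ≤ (s + 3) ^ (s + 2) * (u + 1) ^ (s + 3) :=
        Nat.mul_le_mul (le_refl _) (pow_aux s u hu)

lemma main_le (g n : ℕ) (hg : 1 ≤ g) (hn : 3 ≤ n) (h2 : 2 ≤ tsylv g (n - 2)) :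
    ∀ r, 1 ≤ r → r ≤ n - 1 →
      (r + 1) ^ r * tsylv g (n - r) ^ (r + 1) ≤ 2 * tsylv g (n - 1) ^ 2 := by
  intro r hr
  induction r, hr using Nat.le_induction with
  | base => intro _; exact le_of_eq (by ring)
  | succ r hr ih =>
    intro h
    have hrn : r ≤ n - 1 := by omega
    have h1n : 1 ≤ n - (r + 1) := by omega
    set u := tsylv g (n - (r + 1)) with hu_def
    have hu : 1 ≤ u := tsylv_pos g hg h1n
    have hrec : tsylv g (n - r) = u * (u + 1) := by
      rw [show n - r = (n - (r + 1)) + 1 by omega]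
      exact tsylv_succ g _ h1n
    have core : (r + 2) ^ (r + 1) * u ≤ (r + 1) ^ r * (u + 1) ^ (r + 1) := by
      rcases Nat.lt_or_ge r 2 with h2r | h2r
      · have hr1 : r = 1 := by omega
        subst hr1
        have hu2 : 2 ≤ u := by
          rw [hu_def, show n - (1 + 1) = n - 2 by omega]
          exact h2
        have hsq : 2 * 2 ≤ u * u := Nat.mul_le_mul hu2 hu2
        norm_num
        nlinarith [hu2, hsq]
      · obtain ⟨s, rfl⟩ : ∃ s, r = s + 2 := ⟨r - 2, by omega⟩
        exact le_of_lt (by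
          have := core_strict s u hu
          calc (s + 2 + 2) ^ (s + 2 + 1) * u = (s + 4) ^ (s + 3) * u := by ring_nf
            _ < (s + 3) ^ (s + 2) * (u + 1) ^ (s + 3) := this
            _ = (s + 2 + 1) ^ (s + 2) * (u + 1) ^ (s + 2 + 1) := by ring_nf)
    calc (r + 1 + 1) ^ (r + 1) * u ^ (r + 1 + 1)
        = ((r + 2) ^ (r + 1) * u) * u ^ (r + 1) := by ring
      _ ≤ ((r + 1) ^ r * (u + 1) ^ (r + 1)) * u ^ (r + 1) :=
          Nat.mul_le_mul core (le_refl _)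
      _ = (r + 1) ^ r * (u * (u + 1)) ^ (r + 1) := by rw [mul_pow]; ring
      _ = (r + 1) ^ r * tsylv g (n - r) ^ (r + 1) := by rw [hrec]
      _ ≤ 2 * tsylv g (n - 1) ^ 2 := ih hrn

lemma main_lt (g n : ℕ) (hg : 1 ≤ g) (hn : 3 ≤ n) (h2 : 2 ≤ tsylv g (n - 2)) :
    ∀ r, 3 ≤ r → r ≤ n - 1 →
      (r + 1) ^ r * tsylv g (n - r) ^ (r + 1) < 2 * tsylv g (n - 1) ^ 2 := by
  intro r hr3 hrn
  obtain ⟨s, rfl⟩ : ∃ s, r = s + 3 := ⟨r - 3, by omega⟩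
  have h1n : 1 ≤ n - (s + 3) := by omega
  set u := tsylv g (n - (s + 3)) with hu_def
  have hu : 1 ≤ u := tsylv_pos g hg h1n
  have hrec : tsylv g (n - (s + 2)) = u * (u + 1) := by
    rw [show n - (s + 2) = (n - (s + 3)) + 1 by omega]
    exact tsylv_succ g _ h1n
  have core := core_strict s u hu
  calc (s + 3 + 1) ^ (s + 3) * u ^ (s + 3 + 1)
      = ((s + 4) ^ (s + 3) * u) * u ^ (s + 3) := by ring
    _ < ((s + 3) ^ (s + 2) * (u + 1) ^ (s + 3)) * u ^ (s + 3) :=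
        mul_lt_mul_of_pos_right core (pow_pos (by omega) _)
    _ = (s + 2 + 1) ^ (s + 2) * (u * (u + 1)) ^ (s + 2 + 1) := by rw [mul_pow]; ring_nf
    _ = (s + 2 + 1) ^ (s + 2) * tsylv g (n - (s + 2)) ^ (s + 2 + 1) := by rw [hrec]
    _ ≤ 2 * tsylv g (n - 1) ^ 2 := main_le g n hg hn h2 (s + 2) (by omega) (by omega)

/-- For `g ≥ 1`, `n ≥ 3` with `(n,g) ≠ (3,1)` and `1 ≤ r ≤ n-1`
one has `(r+1)^r · t_{g,n-r}^{r+1} ≤ 2·t_{g,n-1}²`, with equality iff `r = 1` or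
`(g,r,n)` equals `(1,2,4)` or `(2,2,3)`. -/
theorem sylvester_ineq_ii
    (g n : ℕ) (hg : 1 ≤ g) (hn : 3 ≤ n) (hng : ¬(n = 3 ∧ g = 1)) :
    ∀ r, 1 ≤ r → r ≤ n - 1 →
      (r + 1) ^ r * tsylv g (n - r) ^ (r + 1) ≤ 2 * tsylv g (n - 1) ^ 2 ∧
        ((r + 1) ^ r * tsylv g (n - r) ^ (r + 1) = 2 * tsylv g (n - 1) ^ 2 ↔
          r = 1 ∨ (g = 1 ∧ r = 2 ∧ n = 4) ∨ (g = 2 ∧ r = 2 ∧ n = 3)) := by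
  have h2 : 2 ≤ tsylv g (n - 2) := by
    rcases Nat.lt_or_ge g 2 with hg1 | hg2
    · have hg1' : g = 1 := by omega
      have hn4 : 4 ≤ n := by omega
      calc 2 = tsylv g 2 := by rw [tsylv_two, hg1']
        _ ≤ tsylv g (n - 2) := tsylv_le g (by omega) (by omega)
    · calc 2 ≤ g := hg2
        _ = tsylv g 1 := (tsylv_one g).symm
        _ ≤ tsylv g (n - 2) := tsylv_le g (by omega) (by omega)
  intro r hr1 hrn
  rcases Nat.lt_or_ge r 3 with hr | hr3
  · interval_cases r
    · exact ⟨le_of_eq (by ring), ⟨fun _ => Or.inl rfl, fun _ => by ring⟩⟩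
    · have h1n : 1 ≤ n - 2 := by omega
      set u := tsylv g (n - 2) with hu_def
      have hrec : tsylv g (n - 1) = u * (u + 1) := by
        rw [show n - 1 = (n - 2) + 1 by omega]
        exact tsylv_succ g _ h1n
      have hiff : u = 2 ↔ (g = 1 ∧ n - 2 = 2) ∨ (g = 2 ∧ n - 2 = 1) := by
        rw [hu_def]
        exact tsylv_eq_two g hg h1n
      constructor
      · rw [hrec]
        rcases eq_or_lt_of_le h2 with he | hl
        · rw [← he]; norm_num
        · have h3 : 3 ≤ u := hl
          have hp : 3 * u ^ 3 ≤ u * u ^ 3 := Nat.mul_le_mul_right _ h3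
          have e : 2 * (u * (u + 1)) ^ 2 = 2 * (u * u ^ 3) + 4 * u ^ 3 + 2 * u ^ 2 := by ring
          have e2 : (2 + 1) ^ 2 * u ^ (2 + 1) = 9 * u ^ 3 := by ring
          omega
      · rw [hrec]
        constructor
        · intro heq
          have hu2 : u = 2 := by
            by_contra hne
            have h3 : 3 ≤ u := by omega
            have hp : 3 * u ^ 3 ≤ u * u ^ 3 := Nat.mul_le_mul_right _ h3
            have hq : 1 ≤ u ^ 3 := Nat.one_le_pow _ _ (by omega)
            have e : 2 * (u * (u + 1)) ^ 2 = 2 * (u * u ^ 3) + 4 * u ^ 3 + 2 * u ^ 2 := by ring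
            have e2 : (2 + 1) ^ 2 * u ^ (2 + 1) = 9 * u ^ 3 := by ring
            omega
          right
          rcases hiff.mp hu2 with ⟨hg1, hn2⟩ | ⟨hg2', hn2⟩
          · exact Or.inl ⟨hg1, rfl, by omega⟩
          · exact Or.inr ⟨hg2', rfl, by omega⟩
        · rintro (h | ⟨hg1, _, hn4⟩ | ⟨hg2', _, hn3⟩)
          · omega
          · have : u = 2 := hiff.mpr (Or.inl ⟨hg1, by omega⟩)
            rw [this]; norm_num
          · have : u = 2 := hiff.mpr (Or.inr ⟨hg2', by omega⟩)
            rw [this]; norm_num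
  · have hlt := main_lt g n hg hn h2 r hr3 hrn
    refine ⟨le_of_lt hlt, ?_⟩
    constructor
    · intro heq; exact absurd heq (ne_of_lt hlt)
    · rintro (h | ⟨_, h', _⟩ | ⟨_, h', _⟩) <;> omega
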